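/- Let m be a natural number with 1 < m < ω and Q ⊆ P a nonempty subset of a forcing notion. If int(Q) ≥ 1 − 1/(m+1), then Q is m-linked, i.e., every subset of Q of size at most m has a lower bound in P. -/

import Mathlib

/-- The intersection index `i_*(q̄)`: the maximal size of a set `F ⊆ n` such that
`{q i : i ∈ F}` has a lower bound in `P`. -/
noncomputable def iStar {P : Type*} [Preorder P] {n : ℕ} (q : Fin n → P) : ℕ :=
  sSup {k | ∃ F : Finset (Fin n), (∃ r, ∀ i ∈ F, r ≤ q i) ∧ F.card = k}

/-- The intersection number of `Q` in the forcing notion `P`: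
`inf { i_*(q̄)/n : q̄ ∈ Qⁿ, n ≥ 1 }`. -/
noncomputable def intNum (P : Type*) [Preorder P] (Q : Set P) : ℝ :=
  sInf {x | ∃ n : ℕ, 0 < n ∧ ∃ q : Fin n → P, (∀ i, q i ∈ Q) ∧ x = (iStar q : ℝ) / n}

/-!
For `q̄ ∈ Qⁿ` with `n ≤ m` the hypothesis gives `i_*(q̄) ≥ (1 - 1/(m+1)) n > n - 1`, so
`i_*(q̄) = n`: the whole family `q̄` has a lower bound. Apply this to an enumeration of `S`.
-/

open Finset

section IntersectionIndex

variable {P : Type*} [Preorder P] {n : ℕ}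

theorem exists_finset_card_eq_iStar [Nonempty P] (q : Fin n → P) :
    ∃ F : Finset (Fin n), (∃ r, ∀ i ∈ F, r ≤ q i) ∧ F.card = iStar q := by
  refine Nat.sSup_mem (s := {k | ∃ F : Finset (Fin n), (∃ r, ∀ i ∈ F, r ≤ q i) ∧ F.card = k})
    ⟨0, ∅, ⟨Classical.arbitrary P, by simp⟩, rfl⟩ ⟨n, ?_⟩
  rintro k ⟨F, -, rfl⟩
  simpa using F.card_le_univ

theorem exists_forall_le_of_le_iStar [Nonempty P] {q : Fin n → P} (h : n ≤ iStar q) :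
    ∃ r, ∀ i, r ≤ q i := by
  obtain ⟨F, ⟨r, hr⟩, hF⟩ := exists_finset_card_eq_iStar q
  have hF_le : F.card ≤ n := by simpa using F.card_le_univ
  have hF_univ : F = univ := eq_univ_of_card F (by simp only [Fintype.card_fin]; omega)
  exact ⟨r, fun i => hr i (hF_univ ▸ mem_univ i)⟩

theorem intNum_le_iStar_div {Q : Set P} {q : Fin n → P} (hq : ∀ i, q i ∈ Q) (hn : 0 < n) :
    intNum P Q ≤ (iStar q : ℝ) / n :=
  csInf_le ⟨0, by rintro x ⟨k, -, p, -, rfl⟩; positivity⟩ ⟨n, hn, q, hq, rfl⟩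

end IntersectionIndex

theorem le_of_one_sub_inv_succ_le_div {k n m : ℕ} (hn : 0 < n) (hnm : n ≤ m)
    (h : 1 - 1 / ((m : ℝ) + 1) ≤ k / n) : n ≤ k := by
  have hn' : (0 : ℝ) < n := by exact_mod_cast hn
  have hnm' : (n : ℝ) ≤ m := by exact_mod_cast hnm
  rw [le_div_iff₀ hn'] at h
  have hfrac : (n : ℝ) / (m + 1) < 1 := by rw [div_lt_one (by positivity)]; linarith
  have hk : (n : ℝ) < k + 1 := by
    calc (n : ℝ) = (1 - 1 / (m + 1)) * n + n / (m + 1) := by ring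
      _ < k + 1 := by linarith
  exact Nat.lt_succ_iff.mp (by exact_mod_cast hk)

theorem linked_of_intNum_ge_general {P : Type*} [Preorder P] (Q : Set P) (hQ : Q.Nonempty)
    (m : ℕ)
    (h : 1 - 1 / ((m : ℝ) + 1) ≤ intNum P Q) :
    ∀ S : Finset P, ↑S ⊆ Q → S.card ≤ m → ∃ r, ∀ a ∈ S, r ≤ a := by
  intro S hSQ hSm
  obtain ⟨r₀, -⟩ := hQ
  have : Nonempty P := ⟨r₀⟩
  rcases S.eq_empty_or_nonempty with rfl | hS
  · exact ⟨r₀, by simp⟩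
  let q : Fin S.card → P := fun i => S.equivFin.symm i
  have hqQ : ∀ i, q i ∈ Q := fun i => hSQ (S.equivFin.symm i).2
  have hfull : S.card ≤ iStar q :=
    le_of_one_sub_inv_succ_le_div hS.card_pos hSm (h.trans (intNum_le_iStar_div hqQ hS.card_pos))
  obtain ⟨r, hr⟩ := exists_forall_le_of_le_iStar hfull
  exact ⟨r, fun a ha => by simpa [q] using hr (S.equivFin ⟨a, ha⟩)⟩

theorem linked_of_intNum_ge {P : Type*} [Preorder P] (Q : Set P) (hQ : Q.Nonempty)
    (m : ℕ) (hm : 1 < m)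
    (h : 1 - 1 / ((m : ℝ) + 1) ≤ intNum P Q) :
    ∀ S : Finset P, ↑S ⊆ Q → S.card ≤ m → ∃ r, ∀ a ∈ S, r ≤ a :=
  linked_of_intNum_ge_general Q hQ m h
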